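/- With 𝒜 and 𝒫 as defined from an invertible matrix A and vector y (𝒜 = [[A, −y],[−yᵀ, 0]], 𝒫 = [[A, 0],[−yᵀ, −1]]), if yᵀA⁻¹y ≠ 0 then the preconditioned matrix 𝒫⁻¹𝒜 has eigenvalue 1 with multiplicity at least n, and its remaining eigenvalue is yᵀA⁻¹y; i.e., the characteristic polynomial of 𝒫⁻¹𝒜 is (λ − 1)ⁿ (λ − yᵀA⁻¹y). -/
import Mathlib


open Matrix Polynomial

theorem ipm_preconditioned_charpoly
    (n : ℕ) (A : Matrix (Fin n) (Fin n) ℝ) (y : Fin n → ℝ) (hA : IsUnit A)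
    (hy : y ⬝ᵥ (A⁻¹ *ᵥ y) ≠ 0) :
    ((Matrix.fromBlocks A 0
          (Matrix.of fun (_ : Fin 1) j => -y j) (Matrix.of fun _ _ : Fin 1 => (-1 : ℝ)))⁻¹ *
        (Matrix.fromBlocks A (Matrix.of fun i (_ : Fin 1) => -y i)
          (Matrix.of fun (_ : Fin 1) j => -y j) 0)).charpoly =
      (X - 1) ^ n * (X - C (y ⬝ᵥ (A⁻¹ *ᵥ y))) := by
  have hAdet : IsUnit A.det := (Matrix.isUnit_iff_isUnit_det A).mp hA
  set s : ℝ := y ⬝ᵥ (A⁻¹ *ᵥ y) with hs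
  set P : Matrix (Fin n ⊕ Fin 1) (Fin n ⊕ Fin 1) ℝ :=
    Matrix.fromBlocks A 0
      (Matrix.of fun (_ : Fin 1) j => -y j) (Matrix.of fun _ _ : Fin 1 => (-1 : ℝ)) with hP
  set M : Matrix (Fin n ⊕ Fin 1) (Fin n ⊕ Fin 1) ℝ :=
    Matrix.fromBlocks 1 (Matrix.of fun i (_ : Fin 1) => -(A⁻¹ *ᵥ y) i)
      0 (Matrix.of fun _ _ : Fin 1 => s) with hM
  have hPdet : IsUnit P.det := by
    rw [hP, Matrix.det_fromBlocks_zero₁₂]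
    simp only [Matrix.det_fin_one, Matrix.of_apply]
    exact hAdet.mul (isUnit_one.neg)
  have hPM : P * M =
      Matrix.fromBlocks A (Matrix.of fun i (_ : Fin 1) => -y i)
        (Matrix.of fun (_ : Fin 1) j => -y j) 0 := by
    have hAio : A *ᵥ (A⁻¹ *ᵥ y) = y := by
      rw [Matrix.mulVec_mulVec, Matrix.mul_nonsing_inv A hAdet, Matrix.one_mulVec]
    have h2 : A * (Matrix.of fun i (_ : Fin 1) => -(A⁻¹ *ᵥ y) i) +
        (0 : Matrix (Fin n) (Fin 1) ℝ) * (Matrix.of fun _ _ : Fin 1 => s) =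
        Matrix.of fun i (_ : Fin 1) => -y i := by
      ext i j
      simp only [Matrix.add_apply, Matrix.zero_mul, Matrix.zero_apply, add_zero,
        Matrix.mul_apply, Matrix.of_apply, mul_neg]
      calc (∑ k, -(A i k * (A⁻¹ *ᵥ y) k)) = -(A *ᵥ (A⁻¹ *ᵥ y)) i := by
            simp [Matrix.mulVec, dotProduct]
        _ = -y i := by rw [hAio]
    have h4 : (Matrix.of fun (_ : Fin 1) j => -y j) *
        (Matrix.of fun i (_ : Fin 1) => -(A⁻¹ *ᵥ y) i) +
        (Matrix.of fun _ _ : Fin 1 => (-1 : ℝ)) * (Matrix.of fun _ _ : Fin 1 => s) =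
        (0 : Matrix (Fin 1) (Fin 1) ℝ) := by
      ext i j
      simp only [Matrix.add_apply, Matrix.mul_apply, Matrix.of_apply, Matrix.zero_apply,
        mul_neg, neg_mul, neg_neg, Fin.sum_univ_one]
      have : ∑ k, y k * (A⁻¹ *ᵥ y) k = s := rfl
      rw [this]; ring
    rw [hP, hM, Matrix.fromBlocks_multiply, h2, h4]
    simp
  have key : P⁻¹ * (Matrix.fromBlocks A (Matrix.of fun i (_ : Fin 1) => -y i)
        (Matrix.of fun (_ : Fin 1) j => -y j) 0) = M := by
    rw [← hPM, ← Matrix.mul_assoc, Matrix.nonsing_inv_mul P hPdet, Matrix.one_mul]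
  rw [key, hM, Matrix.charpoly_fromBlocks_zero₂₁]
  congr 1
  · rw [Matrix.charpoly_of_upperTriangular (1 : Matrix (Fin n) (Fin n) ℝ)
      (fun i j hij => Matrix.one_apply_ne (ne_of_gt hij))]
    simp [Matrix.one_apply_eq, Finset.prod_const]
  · rw [Matrix.charpoly, Matrix.det_fin_one]
    simp [Matrix.charmatrix_apply_eq]
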